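/- arXiv:1404.5334 — 13 statements merged into one kernel-verified Lean document; each statement's English description precedes it below -/
import Mathlib

section
/- If G * R = H where R has full domain, both G and H are graphs without isolated vertices, then the number of connected components of G is at least the number of connected components of H. -/
/-- If `G * R = H` where `R` has full domain and both `G` and `H` have no isolated
vertices, then the number of connected components of `G` is at least the number of
connected components of `H`. -/
theorem stmt_2 {V W : Type} [Finite V] [Finite W]
    (E : V → V → Prop) (F : W → W → Prop)
    (hEsym : ∀ u v, E u v → E v u) (hFsym : ∀ u v, F u v → F v u)
    (R : V → W → Prop)
    (hdom : ∀ v, ∃ w, R v w)            -- R has full domain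
    (himg : ∀ w, ∃ v, R v w)            -- every vertex of H has a preimage
    (hstar : ∀ a b, F a b ↔ ∃ u v, E u v ∧ R u a ∧ R v b)  -- G * R = H
    (hGnoiso : ∀ v, ∃ v', E v v')       -- G has no isolated vertices
    (hHnoiso : ∀ w, ∃ w', F w w') :     -- H has no isolated vertices
    Nat.card (Quot (Relation.ReflTransGen F)) ≤
      Nat.card (Quot (Relation.ReflTransGen E)) := by
  classical
  -- two images of the same vertex are F-connected
  have key : ∀ v w w', R v w → R v w' → Relation.ReflTransGen F w w' := by
    intro v w w' h1 h2
    obtain ⟨v'', hE⟩ := hGnoiso v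
    obtain ⟨w'', hR⟩ := hdom v''
    have hF1 : F w w'' := (hstar w w'').mpr ⟨v, v'', hE, h1, hR⟩
    have hF2 : F w' w'' := (hstar w' w'').mpr ⟨v, v'', hE, h2, hR⟩
    exact Relation.ReflTransGen.head hF1
      (Relation.ReflTransGen.single (hFsym _ _ hF2))
  have step : ∀ {v v'}, Relation.ReflTransGen E v v' →
      ∀ w w', R v w → R v' w' → Relation.ReflTransGen F w w' := by
    intro v v' h
    induction h with
    | refl => exact fun w w' h1 h2 => key _ _ _ h1 h2
    | @tail b c hbc hEbc ih =>
      intro w w' h1 h2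
      obtain ⟨wb, hwb⟩ := hdom b
      have hF : F wb w' := (hstar wb w').mpr ⟨b, c, hEbc, hwb, h2⟩
      exact (ih w wb h1 hwb).trans (Relation.ReflTransGen.single hF)
  choose g hg using hdom
  let f : Quot (Relation.ReflTransGen E) → Quot (Relation.ReflTransGen F) :=
    Quot.lift (fun v => Quot.mk _ (g v)) (fun a b hab =>
      Quot.sound (step hab _ _ (hg a) (hg b)))
  have hsurj : Function.Surjective f := by
    intro q
    induction q using Quot.ind with
    | _ w =>
      obtain ⟨v, hR⟩ := himg w
      exact ⟨Quot.mk _ v, Quot.sound (key v (g v) w (hg v) hR)⟩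
  exact Nat.card_le_card_of_surjective f hsurj
end

section
/- Distance contraction under relations: suppose G * R = H with R having full domain, x, y ∈ V_G, u, v ∈ V_H with (x,u) ∈ R and (y,v) ∈ R. If x ≠ y then d_H(u,v) ≤ d_G(x,y); if x = y and x is not an isolated vertex then d_H(u,v) ≤ 2. -/
/-- `hasWalk E n x y`: there is a walk of length `n` from `x` to `y` in the graph with
edge relation `E`. The graph distance `d(x,y)` is the least such `n`. -/
def hasWalk {V : Type*} (E : V → V → Prop) : ℕ → V → V → Prop
  | 0, x, y => x = y
  | n + 1, x, y => ∃ z, E x z ∧ hasWalk E n z y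

/-- Distance contraction under relations: if `G * R = H` with `R` of full domain,
`(x,u) ∈ R` and `(y,v) ∈ R`, then `x ≠ y` implies `d_H(u,v) ≤ d_G(x,y)`, and if
`x = y` with `x` not isolated then `d_H(u,v) ≤ 2`. -/
theorem stmt_4 {V W : Type*} (E : V → V → Prop) (F : W → W → Prop)
    (hEsym : ∀ u v, E u v → E v u)
    (R : V → W → Prop)
    (hdom : ∀ v, ∃ w, R v w) (himg : ∀ w, ∃ v, R v w)
    (hstar : ∀ a b, F a b ↔ ∃ u' v', E u' v' ∧ R u' a ∧ R v' b)  -- G * R = H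
    (x y : V) (u v : W) (hxu : R x u) (hyv : R y v) :
    (x ≠ y → ∀ n : ℕ, hasWalk E n x y → ∃ m ≤ n, hasWalk F m u v) ∧
    (x = y → (∃ z, E x z) → ∃ m ≤ 2, hasWalk F m u v) := by
  have key : ∀ n : ℕ, ∀ x u, R x u → x ≠ y → hasWalk E n x y →
      ∃ m ≤ n, hasWalk F m u v := by
    intro n
    induction n with
    | zero => intro x u _ hne h; exact absurd h hne
    | succ n ih =>
      intro x u hxu hne h
      obtain ⟨z, hxz, hw⟩ := h
      by_cases hzy : z = y
      · subst hzy
        exact ⟨1, by omega, v, (hstar u v).2 ⟨x, z, hxz, hxu, hyv⟩, rfl⟩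
      · obtain ⟨w, hzw⟩ := hdom z
        obtain ⟨m, hm, hwalk⟩ := ih z w hzw hzy hw
        exact ⟨m + 1, by omega, w, (hstar u w).2 ⟨x, z, hxz, hxu, hzw⟩, hwalk⟩
  refine ⟨fun hne n => key n x u hxu hne, fun hxy ⟨z, hxz⟩ => ?_⟩
  subst hxy
  obtain ⟨w, hzw⟩ := hdom z
  exact ⟨2, le_refl 2, w, (hstar u w).2 ⟨x, z, hxz, hxu, hzw⟩,
    v, (hstar w v).2 ⟨z, x, hEsym x z hxz, hzw, hyv⟩, rfl⟩
end

section
/- For a simple graph H, there exists a relation R with K_k * R = H if and only if H is a complete m-partite graph for some m ≤ k. -/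
/-- For a simple graph `H`, there is a relation `R` with `K_k * R = H` iff `H` is a
complete `m`-partite graph for some `m ≤ k` (encoded by a part-assignment
`p : W → Fin k` with adjacency exactly between distinct parts). -/
theorem stmt_5 {W : Type*} (k : ℕ) (F : W → W → Prop)
    (hsym : ∀ a b, F a b → F b a) (hirr : ∀ a, ¬ F a a) :
    (∃ R : Fin k → W → Prop,
        (∀ w, ∃ i, R i w) ∧                            -- every vertex of H has a preimage
        (∀ a b, F a b ↔ ∃ i j : Fin k, i ≠ j ∧ R i a ∧ R j b))  -- K_k * R = H
      ↔ (∃ p : W → Fin k, ∀ a b, F a b ↔ p a ≠ p b) := by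
  constructor
  · rintro ⟨R, hR1, hR2⟩
    choose p hp using hR1
    refine ⟨p, fun a b => ?_⟩
    rw [hR2]
    constructor
    · rintro ⟨i, j, hij, hia, hjb⟩ h
      have h1 : i = p a := by
        by_contra hne
        exact hirr a ((hR2 a a).mpr ⟨i, p a, hne, hia, hp a⟩)
      have h2 : j = p b := by
        by_contra hne
        exact hirr b ((hR2 b b).mpr ⟨j, p b, hne, hjb, hp b⟩)
      exact hij (h1.trans (h.trans h2.symm))
    · intro h
      exact ⟨p a, p b, h, hp a, hp b⟩
  · rintro ⟨p, hp⟩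
    refine ⟨fun i w => p w = i, fun w => ⟨p w, rfl⟩, fun a b => ?_⟩
    rw [hp]
    constructor
    · intro h; exact ⟨p a, p b, h, rfl, rfl⟩
    · rintro ⟨i, j, hij, ha, hb⟩; rw [ha, hb]; exact hij
end

section
/- A relation R with G * R = H (R with full domain) is reversible with respect to G, i.e. (G * R) * R⁺ = G, if and only if for every pair of vertices x, y of G with R(x) ∩ R(y) ≠ ∅ one has N_G(x) = N_G(y). -/
/-- A relation `R` with `G * R = H` (full domain) is reversible w.r.t. `G`,
i.e. `(G * R) * R⁺ = G`, iff any two vertices of `G` with a common image have the same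
open neighbourhood in `G`. -/
theorem stmt_6 {V W : Type*} (E : V → V → Prop) (F : W → W → Prop)
    (hsym : ∀ u v, E u v → E v u)
    (R : V → W → Prop)
    (hdom : ∀ v, ∃ w, R v w) (himg : ∀ w, ∃ v, R v w)
    (hstar : ∀ a b, F a b ↔ ∃ u v, E u v ∧ R u a ∧ R v b) :  -- G * R = H
    ((∀ x y, E x y ↔ ∃ u v, F u v ∧ R x u ∧ R y v)           -- H * R⁺ = G
      ↔ (∀ x y, (∃ p, R x p ∧ R y p) → ∀ z, E x z ↔ E y z)) := by
  constructor
  · intro h x y ⟨p, hxp, hyp⟩ z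
    obtain ⟨q, hzq⟩ := hdom z
    constructor
    · intro hxz
      exact (h y z).mpr ⟨p, q, (hstar p q).mpr ⟨x, z, hxz, hxp, hzq⟩, hyp, hzq⟩
    · intro hyz
      exact (h x z).mpr ⟨p, q, (hstar p q).mpr ⟨y, z, hyz, hyp, hzq⟩, hxp, hzq⟩
  · intro h x y
    constructor
    · intro hxy
      obtain ⟨u, hxu⟩ := hdom x
      obtain ⟨v, hyv⟩ := hdom y
      exact ⟨u, v, (hstar u v).mpr ⟨x, y, hxy, hxu, hyv⟩, hxu, hyv⟩
    · rintro ⟨u, v, hF, hxu, hyv⟩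
      obtain ⟨a, b, hab, hau, hbv⟩ := (hstar u v).mp hF
      have hxb : E x b := (h x a ⟨u, hxu, hau⟩ b).mpr hab
      exact hsym y x ((h y b ⟨v, hyv, hbv⟩ x).mpr (hsym x b hxb))
end

section
/- Two graphs G and H are strongly relationally equivalent (there is a relation R with G * R = H and H * R⁺ = G) if and only if their point-determining quotients G_pd and H_pd are isomorphic. -/
/-- The thinness relation: `x ∼ y` iff `x` and `y` have the same open neighbourhood. -/
def thinSetoid {V : Type*} (E : V → V → Prop) : Setoid V :=
  ⟨fun x y => ∀ z, E x z ↔ E y z,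
    ⟨fun _ _ => Iff.rfl, fun h z => (h z).symm, fun h1 h2 z => (h1 z).trans (h2 z)⟩⟩

/-- The edge relation of the point-determining quotient `G_pd`. -/
def pdEdge {V : Type*} (E : V → V → Prop) :
    Quotient (thinSetoid E) → Quotient (thinSetoid E) → Prop :=
  fun σ τ => ∃ x y, Quotient.mk (thinSetoid E) x = σ ∧ Quotient.mk (thinSetoid E) y = τ ∧ E x y

/-- If `a' ∼ a` and `b' ∼ b` (same neighbourhoods) and `E a' b'`, then `E a b`,
for symmetric `E`. -/
lemma adj_congr {V : Type*} {E : V → V → Prop} (hEsym : ∀ u v, E u v → E v u)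
    {a a' b b' : V} (ha : ∀ z, E a' z ↔ E a z) (hb : ∀ z, E b' z ↔ E b z)
    (h : E a' b') : E a b :=
  hEsym b a ((hb a).mp (hEsym a b' ((ha b').mp h)))

/-- Setoid-relation form of `Quotient.exact` for `thinSetoid`. -/
lemma thin_exact {V : Type*} {E : V → V → Prop} {x y : V}
    (h : Quotient.mk (thinSetoid E) x = Quotient.mk (thinSetoid E) y) :
    ∀ z, E x z ↔ E y z :=
  Quotient.exact h

/-- `G` and `H` are strongly relationally equivalent iff their point-determining
graphs `G_pd`, `H_pd` are isomorphic. -/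
theorem stmt_8 {V W : Type} [Finite V] [Finite W] (E : V → V → Prop) (F : W → W → Prop)
    (hEsym : ∀ u v, E u v → E v u) (hFsym : ∀ u v, F u v → F v u) :
    (∃ R : V → W → Prop,
        (∀ v, ∃ w, R v w) ∧ (∀ w, ∃ v, R v w) ∧
        (∀ a b, F a b ↔ ∃ u v, E u v ∧ R u a ∧ R v b) ∧      -- G * R = H
        (∀ a b, E a b ↔ ∃ u v, F u v ∧ R a u ∧ R b v))       -- H * R⁺ = G
      ↔ (∃ e : Quotient (thinSetoid E) ≃ Quotient (thinSetoid F),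
          ∀ a b, pdEdge E a b ↔ pdEdge F (e a) (e b)) := by
  classical
  constructor
  · rintro ⟨R, htot, hsurj, hGR, hHR⟩
    -- two vertices of `V` related to a common vertex of `W` have equal neighbourhoods
    have keyE : ∀ a u w, R a w → R u w → ∀ z, E u z → E a z := by
      intro a u w ha hu z huz
      rcases htot z with ⟨q, hq⟩
      exact (hHR a z).mpr ⟨w, q, (hGR w q).mpr ⟨u, z, huz, hu, hq⟩, ha, hq⟩
    have keyF : ∀ a u w, R w a → R w u → ∀ z, F u z → F a z := by
      intro a u w ha hu z huz
      rcases hsurj z with ⟨q, hq⟩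
      exact (hGR a z).mpr ⟨w, q, (hHR w q).mpr ⟨u, z, huz, hu, hq⟩, ha, hq⟩
    -- transport of neighbourhood-equivalence across `R`
    have transF : ∀ v v' w w', (∀ z, E v z ↔ E v' z) → R v w → R v' w' →
        ∀ b, F w b → F w' b := by
      intro v v' w w' hvv hw hw' b hfb
      rcases (hGR w b).mp hfb with ⟨x, y, hxy, hxw, hyb⟩
      have hvy : E v y := keyE v x w hw hxw y hxy
      exact (hGR w' b).mpr ⟨v', y, (hvv y).mp hvy, hw', hyb⟩
    -- the induced maps on quotients
    set g : V → W := fun v => Classical.choose (htot v) with hgdef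
    have hg : ∀ v, R v (g v) := fun v => Classical.choose_spec (htot v)
    set g' : W → V := fun w => Classical.choose (hsurj w) with hg'def
    have hg' : ∀ w, R (g' w) w := fun w => Classical.choose_spec (hsurj w)
    have ewd : ∀ v v' : V, (∀ z, E v z ↔ E v' z) →
        Quotient.mk (thinSetoid F) (g v) = Quotient.mk (thinSetoid F) (g v') := by
      intro v v' h
      refine Quotient.sound (fun z => ⟨fun h1 => transF v v' _ _ h (hg v) (hg v') z h1,
        fun h1 => transF v' v _ _ (fun z => (h z).symm) (hg v') (hg v) z h1⟩)
    have fwd : ∀ w w' : W, (∀ z, F w z ↔ F w' z) →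
        Quotient.mk (thinSetoid E) (g' w) = Quotient.mk (thinSetoid E) (g' w') := by
      intro w w' h
      refine Quotient.sound (fun z => ?_)
      constructor
      · intro h1
        rcases (hHR (g' w) z).mp h1 with ⟨x, y, hxy, hx, hy⟩
        have : F w' y := (h y).mp (keyF w x (g' w) (hg' w) hx y hxy)
        exact (hHR (g' w') z).mpr ⟨w', y, this, hg' w', hy⟩
      · intro h1
        rcases (hHR (g' w') z).mp h1 with ⟨x, y, hxy, hx, hy⟩
        have : F w y := (h y).mpr (keyF w' x (g' w') (hg' w') hx y hxy)
        exact (hHR (g' w) z).mpr ⟨w, y, this, hg' w, hy⟩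
    let eF : Quotient (thinSetoid E) → Quotient (thinSetoid F) :=
      Quotient.lift (fun v => Quotient.mk (thinSetoid F) (g v)) ewd
    let fF : Quotient (thinSetoid F) → Quotient (thinSetoid E) :=
      Quotient.lift (fun w => Quotient.mk (thinSetoid E) (g' w)) fwd
    have left : ∀ σ, fF (eF σ) = σ := by
      refine Quotient.ind (fun v => ?_)
      refine Quotient.sound (fun z => ?_)
      exact ⟨fun h => keyE v (g' (g v)) (g v) (hg v) (hg' (g v)) z h,
        fun h => keyE (g' (g v)) v (g v) (hg' (g v)) (hg v) z h⟩
    have right : ∀ τ, eF (fF τ) = τ := by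
      refine Quotient.ind (fun w => ?_)
      refine Quotient.sound (fun z => ?_)
      exact ⟨fun h => keyF w (g (g' w)) (g' w) (hg' w) (hg (g' w)) z h,
        fun h => keyF (g (g' w)) w (g' w) (hg (g' w)) (hg' w) z h⟩
    refine ⟨⟨eF, fF, left, right⟩, ?_⟩
    refine Quotient.ind₂ (fun a b => ?_)
    show pdEdge E _ _ ↔ pdEdge F (Quotient.mk (thinSetoid F) (g a)) (Quotient.mk (thinSetoid F) (g b))
    constructor
    · rintro ⟨x, y, hx, hy, hxy⟩
      have hab : E a b := adj_congr hEsym (thin_exact hx) (thin_exact hy) hxy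
      exact ⟨g a, g b, rfl, rfl, (hGR (g a) (g b)).mpr ⟨a, b, hab, hg a, hg b⟩⟩
    · rintro ⟨x, y, hx, hy, hxy⟩
      have hab : F (g a) (g b) := adj_congr hFsym (thin_exact hx) (thin_exact hy) hxy
      rcases (hGR (g a) (g b)).mp hab with ⟨u, v, huv, hu, hv⟩
      refine ⟨u, v, Quotient.sound (fun z => ?_), Quotient.sound (fun z => ?_), huv⟩
      · exact ⟨fun h => keyE a u (g a) (hg a) hu z h, fun h => keyE u a (g a) hu (hg a) z h⟩
      · exact ⟨fun h => keyE b v (g b) (hg b) hv z h, fun h => keyE v b (g b) hv (hg b) z h⟩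
  · rintro ⟨e, he⟩
    refine ⟨fun v w => e (Quotient.mk (thinSetoid E) v) = Quotient.mk (thinSetoid F) w,
      ?_, ?_, ?_, ?_⟩
    · intro v
      rcases Quotient.exists_rep (e (Quotient.mk (thinSetoid E) v)) with ⟨w, hw⟩
      exact ⟨w, hw.symm⟩
    · intro w
      rcases Quotient.exists_rep (e.symm (Quotient.mk (thinSetoid F) w)) with ⟨v, hv⟩
      exact ⟨v, show e _ = _ by rw [hv, Equiv.apply_symm_apply]⟩
    · intro a b
      constructor
      · intro hab
        have h1 : pdEdge F (Quotient.mk (thinSetoid F) a) (Quotient.mk (thinSetoid F) b) :=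
          ⟨a, b, rfl, rfl, hab⟩
        have h2 : pdEdge E (e.symm (Quotient.mk (thinSetoid F) a))
            (e.symm (Quotient.mk (thinSetoid F) b)) := by
          rw [he]
          simpa using h1
        rcases h2 with ⟨u, v, hu, hv, huv⟩
        refine ⟨u, v, huv, ?_, ?_⟩
        · show e _ = _
          rw [hu, Equiv.apply_symm_apply]
        · show e _ = _
          rw [hv, Equiv.apply_symm_apply]
      · rintro ⟨u, v, huv, hu, hv⟩
        have h1 : pdEdge E (Quotient.mk (thinSetoid E) u) (Quotient.mk (thinSetoid E) v) :=
          ⟨u, v, rfl, rfl, huv⟩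
        have h2 := (he _ _).mp h1
        rw [hu, hv] at h2
        rcases h2 with ⟨x, y, hx, hy, hxy⟩
        exact adj_congr hFsym (thin_exact hx) (thin_exact hy) hxy
    · intro a b
      constructor
      · intro hab
        have h1 : pdEdge E (Quotient.mk (thinSetoid E) a) (Quotient.mk (thinSetoid E) b) :=
          ⟨a, b, rfl, rfl, hab⟩
        have h2 := (he _ _).mp h1
        rcases h2 with ⟨x, y, hx, hy, hxy⟩
        exact ⟨x, y, hxy, hx.symm, hy.symm⟩
      · rintro ⟨u, v, huv, hu, hv⟩
        have h1 : pdEdge F (e (Quotient.mk (thinSetoid E) a)) (e (Quotient.mk (thinSetoid E) b)) := by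
          rw [hu, hv]
          exact ⟨u, v, rfl, rfl, huv⟩
        have h2 := (he _ _).mpr h1
        rcases h2 with ⟨x, y, hx, hy, hxy⟩
        exact adj_congr hEsym (thin_exact hx) (thin_exact hy) hxy
end

section
/- Hall's theorem for relations: if G * R = H and R ⊆ V_G × V_H satisfies the Hall condition (|S| ≤ |R(S)| for every S ⊆ V_G), then R contains a monomorphism (an injective graph homomorphism) f : G → H. -/
open Finset

theorem exists_injective_of_card_le_ncard_rel_image {α β : Type*} (R : α → β → Prop)
    (hall : ∀ S : Finset α, #S ≤ {b | ∃ a ∈ S, R a b}.ncard) :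
    ∃ f : α → β, Function.Injective f ∧ ∀ a, R a (f a) := by
  classical
  -- `ncard` of an infinite set is `0`, so the Hall condition at `{a}` makes `R(a)` finite.
  have hfin (a : α) : {b | R a b}.Finite :=
    Set.finite_of_ncard_pos (by simpa using hall {a} : 1 ≤ _)
  obtain ⟨f, hinj, hf⟩ :=
    (all_card_le_biUnion_card_iff_exists_injective fun a => (hfin a).toFinset).mp fun S => by
      have himage : {b | ∃ a ∈ S, R a b} = ↑(S.biUnion fun a => (hfin a).toFinset) := by
        ext; simp
      simpa only [himage, Set.ncard_coe_finset] using hall S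
  exact ⟨f, hinj, fun a => by simpa using hf a⟩

theorem stmt_9_general {V W : Type*}
    (E : V → V → Prop) (F : W → W → Prop) (R : V → W → Prop)
    (hstar : ∀ a b, F a b ↔ ∃ u v, E u v ∧ R u a ∧ R v b)    -- G * R = H
    (hall : ∀ S : Finset V, S.card ≤ Set.ncard {w | ∃ x ∈ S, R x w}) :
    ∃ f : V → W, Function.Injective f ∧ (∀ v, R v (f v)) ∧
      ∀ u v, E u v → F (f u) (f v) := by
  obtain ⟨f, hinj, hR⟩ := exists_injective_of_card_le_ncard_rel_image R hall
  exact ⟨f, hinj, hR, fun u v huv => (hstar _ _).mpr ⟨u, v, huv, hR u, hR v⟩⟩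

/-- Hall's theorem for relations: if `G * R = H` and `R` satisfies the Hall condition
(`|S| ≤ |R(S)|` for every set `S` of vertices of `G`), then `R` contains a
monomorphism (injective homomorphism) `f : G → H`. -/
theorem stmt_9 {V W : Type*} [Fintype V] [Fintype W]
    (E : V → V → Prop) (F : W → W → Prop) (R : V → W → Prop)
    (hdom : ∀ v, ∃ w, R v w) (himg : ∀ w, ∃ v, R v w)
    (hstar : ∀ a b, F a b ↔ ∃ u v, E u v ∧ R u a ∧ R v b)    -- G * R = H
    (hall : ∀ S : Finset V, S.card ≤ Set.ncard {w | ∃ x ∈ S, R x w}) :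
    ∃ f : V → W, Function.Injective f ∧ (∀ v, R v (f v)) ∧
      ∀ u v, E u v → F (f u) (f v) :=
  stmt_9_general E F R hstar hall
end

section
/- If both G and H are R-cores lying in the same weak relational equivalence class (i.e., there exist relations R₁, R₂ with full domain such that G * R₁ = H and H * R₂ = G), then G and H are isomorphic. -/
/-- A graph: a vertex type together with an edge relation. -/
abbrev Gph : Type 1 := Σ V : Type, V → V → Prop

/-- There is a relation with full domain from `G` to `H`: `G * R = H` for some `R`
with full domain and full image. -/
def WRel (G H : Gph) : Prop :=
  ∃ R : G.1 → H.1 → Prop,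
    (∀ g, ∃ h, R g h) ∧ (∀ h, ∃ g, R g h) ∧
    (∀ a b, H.2 a b ↔ ∃ u v, G.2 u v ∧ R u a ∧ R v b)

/-- `G` is an R-core: it has the minimal number of vertices in its weak relational
equivalence class. -/
def IsRCore (G : Gph) : Prop :=
  ∀ H : Gph, Finite H.1 → WRel G H → WRel H G → Nat.card G.1 ≤ Nat.card H.1

section aux

variable {G H : Gph}

/-- If a relation from an R-core violates the Hall condition, we can build a strictly
smaller weakly equivalent graph; contradiction. -/
lemma hall_contra
    (hGfin : Finite G.1) (hHfin : Finite H.1)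
    (hGc : IsRCore G)
    (R : G.1 → H.1 → Prop)
    (hR1 : ∀ g, ∃ h, R g h) (hR2 : ∀ h, ∃ g, R g h)
    (hR3 : ∀ a b, H.2 a b ↔ ∃ u v, G.2 u v ∧ R u a ∧ R v b)
    (S : H.1 → G.1 → Prop)
    (hS1 : ∀ h, ∃ g, S h g) (hS2 : ∀ g, ∃ h, S h g)
    (hS3 : ∀ a b, G.2 a b ↔ ∃ u v, H.2 u v ∧ S u a ∧ S v b)
    (s : Finset G.1) (N : Finset H.1)
    (hN1 : ∀ g h, g ∈ s → R g h → h ∈ N)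
    (hN2 : ∀ h, h ∈ N → ∃ g ∈ s, R g h)
    (hcard : N.card < s.card) : False := by
  classical
  letI : Fintype G.1 := Fintype.ofFinite _
  letI : Fintype H.1 := Fintype.ofFinite _
  -- the smaller vertex type
  let KT : Type := {g : G.1 // g ∉ s} ⊕ {h : H.1 // h ∈ N}
  let R1 : G.1 → KT → Prop := fun g x =>
    match x with
    | Sum.inl g' => (g' : G.1) = g
    | Sum.inr h' => g ∈ s ∧ R g (h' : H.1)
  let K : Gph := ⟨KT, fun x y => ∃ u v, G.2 u v ∧ R1 u x ∧ R1 v y⟩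
  let T : KT → H.1 → Prop := fun x h =>
    match x with
    | Sum.inl g' => R (g' : G.1) h
    | Sum.inr h' => h = (h' : H.1)
  -- R1 followed by T is exactly R
  have hcomp : ∀ g h, (∃ x, R1 g x ∧ T x h) ↔ R g h := by
    intro g h
    constructor
    · rintro ⟨x, hx, ht⟩
      match x with
      | Sum.inl g' =>
        have : (g' : G.1) = g := hx
        rw [← this]; exact ht
      | Sum.inr h' =>
        have : h = (h' : H.1) := ht
        rw [this]; exact hx.2
    · intro hRgh
      by_cases hg : g ∈ s
      · exact ⟨Sum.inr ⟨h, hN1 g h hg hRgh⟩, ⟨hg, hRgh⟩, rfl⟩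
      · exact ⟨Sum.inl ⟨g, hg⟩, rfl, hRgh⟩
  -- K * T = H
  have hKH : ∀ a b, H.2 a b ↔ ∃ x y, K.2 x y ∧ T x a ∧ T y b := by
    intro a b
    rw [hR3]
    constructor
    · rintro ⟨u, v, huv, hua, hvb⟩
      obtain ⟨x, hx1, hx2⟩ := (hcomp u a).2 hua
      obtain ⟨y, hy1, hy2⟩ := (hcomp v b).2 hvb
      exact ⟨x, y, ⟨u, v, huv, hx1, hy1⟩, hx2, hy2⟩
    · rintro ⟨x, y, ⟨u, v, huv, hux, hvy⟩, hxa, hyb⟩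
      exact ⟨u, v, huv, (hcomp u a).1 ⟨x, hux, hxa⟩, (hcomp v b).1 ⟨y, hvy, hyb⟩⟩
  have w1 : WRel G K := by
    refine ⟨R1, ?_, ?_, fun a b => Iff.rfl⟩
    · intro g
      by_cases hg : g ∈ s
      · obtain ⟨h, hh⟩ := hR1 g
        exact ⟨Sum.inr ⟨h, hN1 g h hg hh⟩, hg, hh⟩
      · exact ⟨Sum.inl ⟨g, hg⟩, rfl⟩
    · rintro (⟨g, hg⟩ | ⟨h, hh⟩)
      · exact ⟨g, rfl⟩
      · obtain ⟨g, hg, hgh⟩ := hN2 h hh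
        exact ⟨g, hg, hgh⟩
  have w2 : WRel K G := by
    refine ⟨fun x a => ∃ h, T x h ∧ S h a, ?_, ?_, ?_⟩
    · rintro (⟨g, hg⟩ | ⟨h, hh⟩)
      · obtain ⟨h, hh⟩ := hR1 g
        obtain ⟨a, ha⟩ := hS1 h
        exact ⟨a, h, hh, ha⟩
      · obtain ⟨a, ha⟩ := hS1 h
        exact ⟨a, h, rfl, ha⟩
    · intro a
      obtain ⟨h, hh⟩ := hS2 a
      by_cases hmem : h ∈ N
      · exact ⟨Sum.inr ⟨h, hmem⟩, h, rfl, hh⟩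
      · obtain ⟨g, hg⟩ := hR2 h
        have hgs : g ∉ s := fun hgs => hmem (hN1 g h hgs hg)
        exact ⟨Sum.inl ⟨g, hgs⟩, h, hg, hh⟩
    · intro a b
      rw [hS3]
      constructor
      · rintro ⟨h1, h2, hh, h1a, h2b⟩
        obtain ⟨x, y, hxy, hx, hy⟩ := (hKH h1 h2).1 hh
        exact ⟨x, y, hxy, ⟨h1, hx, h1a⟩, ⟨h2, hy, h2b⟩⟩
      · rintro ⟨x, y, hxy, ⟨h1, hx, h1a⟩, ⟨h2, hy, h2b⟩⟩
        exact ⟨h1, h2, (hKH h1 h2).2 ⟨x, y, hxy, hx, hy⟩, h1a, h2b⟩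
  have hKfin : Finite K.1 := by
    have : Finite KT := by infer_instance
    exact this
  have hle : Nat.card G.1 ≤ Nat.card K.1 := hGc K hKfin w1 w2
  have hKcard : Nat.card K.1 = (Fintype.card G.1 - s.card) + N.card := by
    have h1 : Nat.card K.1 = Nat.card {g : G.1 // g ∉ s} + Nat.card {h : H.1 // h ∈ N} :=
      Nat.card_sum
    have h2 : Nat.card {g : G.1 // g ∉ s} = Fintype.card G.1 - s.card := by
      rw [Nat.card_eq_fintype_card, Fintype.card_subtype_compl]
      simp
    have h3 : Nat.card {h : H.1 // h ∈ N} = N.card := by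
      rw [Nat.card_eq_fintype_card]
      exact Fintype.card_coe N
    rw [h1, h2, h3]
  have hsle : s.card ≤ Fintype.card G.1 := s.card_le_univ
  have hG : Nat.card G.1 = Fintype.card G.1 := Nat.card_eq_fintype_card
  omega
  
/-- Hall's condition + Hall's theorem: a relation from an R-core contains an injection. -/
lemma exists_mono
    (hGfin : Finite G.1) (hHfin : Finite H.1)
    (hGc : IsRCore G)
    (R : G.1 → H.1 → Prop)
    (hR1 : ∀ g, ∃ h, R g h) (hR2 : ∀ h, ∃ g, R g h)
    (hR3 : ∀ a b, H.2 a b ↔ ∃ u v, G.2 u v ∧ R u a ∧ R v b)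
    (S : H.1 → G.1 → Prop)
    (hS1 : ∀ h, ∃ g, S h g) (hS2 : ∀ g, ∃ h, S h g)
    (hS3 : ∀ a b, G.2 a b ↔ ∃ u v, H.2 u v ∧ S u a ∧ S v b) :
    ∃ f : G.1 → H.1, Function.Injective f ∧ ∀ g, R g (f g) := by
  classical
  letI : Fintype H.1 := Fintype.ofFinite _
  let t : G.1 → Finset H.1 := fun g => Finset.univ.filter fun h => R g h
  have hall : ∀ s : Finset G.1, s.card ≤ (s.biUnion t).card := by
    intro s
    by_contra hlt
    push_neg at hlt
    refine hall_contra hGfin hHfin hGc R hR1 hR2 hR3 S hS1 hS2 hS3 s (s.biUnion t)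
      ?_ ?_ hlt
    · intro g h hg hR
      exact Finset.mem_biUnion.2 ⟨g, hg, by simp [t, hR]⟩
    · intro h hh
      obtain ⟨g, hg, hgt⟩ := Finset.mem_biUnion.1 hh
      exact ⟨g, hg, by simpa [t] using hgt⟩
  obtain ⟨f, hfinj, hf⟩ := (Finset.all_card_le_biUnion_card_iff_exists_injective t).1 hall
  exact ⟨f, hfinj, fun g => by simpa [t] using hf g⟩

end aux

/-- If `G` and `H` are both R-cores in the same weak relational equivalence class,
then they are isomorphic. -/
theorem stmt_10 (G H : Gph) (hGfin : Finite G.1) (hHfin : Finite H.1)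
    (hGsym : ∀ u v, G.2 u v → G.2 v u) (hHsym : ∀ u v, H.2 u v → H.2 v u)
    (hGc : IsRCore G) (hHc : IsRCore H)
    (h1 : WRel G H) (h2 : WRel H G) :
    ∃ e : G.1 ≃ H.1, ∀ u v, G.2 u v ↔ H.2 (e u) (e v) := by
  classical
  haveI := hGfin
  haveI := hHfin
  obtain ⟨R, hR1, hR2, hR3⟩ := h1
  obtain ⟨S, hS1, hS2, hS3⟩ := h2
  have hcard : Nat.card G.1 = Nat.card H.1 :=
    le_antisymm (hGc H hHfin ⟨R, hR1, hR2, hR3⟩ ⟨S, hS1, hS2, hS3⟩)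
      (hHc G hGfin ⟨S, hS1, hS2, hS3⟩ ⟨R, hR1, hR2, hR3⟩)
  obtain ⟨f, hfinj, hfR⟩ := exists_mono hGfin hHfin hGc R hR1 hR2 hR3 S hS1 hS2 hS3
  obtain ⟨g, hginj, hgS⟩ := exists_mono hHfin hGfin hHc S hS1 hS2 hS3 R hR1 hR2 hR3
  have hfhom : ∀ u v, G.2 u v → H.2 (f u) (f v) := fun u v huv =>
    (hR3 _ _).2 ⟨u, v, huv, hfR u, hfR v⟩
  have hghom : ∀ u v, H.2 u v → G.2 (g u) (g v) := fun u v huv =>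
    (hS3 _ _).2 ⟨u, v, huv, hgS u, hgS v⟩
  have hfbij : Function.Bijective f :=
    (Nat.bijective_iff_injective_and_card f).2 ⟨hfinj, hcard⟩
  have hφbij : Function.Bijective (g ∘ f) :=
    Finite.injective_iff_bijective.1 (hginj.comp hfinj)
  set π : Equiv.Perm G.1 := Equiv.ofBijective _ hφbij with hπdef
  have hπx : ∀ x, π x = g (f x) := fun x => rfl
  have hπhom : ∀ m : ℕ, ∀ u v, G.2 u v → G.2 ((π ^ m) u) ((π ^ m) v) := by
    intro m
    induction m with
    | zero => simpa using fun u v h => h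
    | succ k ih =>
      intro u v h
      have h2 := ih _ _ (hghom _ _ (hfhom _ _ h))
      have e1 : (π ^ (k + 1)) u = (π ^ k) (π u) := by
        rw [pow_succ, Equiv.Perm.mul_apply]
      have e2 : (π ^ (k + 1)) v = (π ^ k) (π v) := by
        rw [pow_succ, Equiv.Perm.mul_apply]
      rw [e1, e2, hπx u, hπx v]
      exact h2
  set n : ℕ := orderOf π with hn
  have hnpos : 0 < n := orderOf_pos π
  have hπn : π ^ n = 1 := pow_orderOf_eq_one π
  have key : ∀ a, f ((π ^ (n - 1)) (g a)) = a := by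
    intro a
    apply hginj
    have : g (f ((π ^ (n - 1)) (g a))) = π ((π ^ (n - 1)) (g a)) := (hπx _).symm
    rw [this, ← Equiv.Perm.mul_apply, ← pow_succ']
    have : n - 1 + 1 = n := Nat.succ_pred_eq_of_pos hnpos
    rw [this, hπn]
    rfl
  refine ⟨Equiv.ofBijective f hfbij, fun u v => ⟨hfhom u v, ?_⟩⟩
  intro h
  have h2 := hπhom (n - 1) _ _ (hghom _ _ h)
  have e1 : (π ^ (n - 1)) (g (f u)) = u := hfinj (key (f u))
  have e2 : (π ^ (n - 1)) (g (f v)) = v := hfinj (key (f v))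
  have h3 : G.2 u v := by
    rw [← e1, ← e2]
    exact h2
  exact h3
end

section
/- The R-core of a graph G is isomorphic to an induced subgraph of G. -/
namespace RCoreAux

/-- Iterated composition power of a relation. -/
def rpow {α : Type} (T : α → α → Prop) : ℕ → α → α → Prop
  | 0 => Eq
  | n+1 => fun x y => ∃ z, rpow T n x z ∧ T z y

variable {α : Type}

lemma rpow_succ (T : α → α → Prop) (n : ℕ) (x y : α) :
    rpow T (n+1) x y ↔ ∃ z, rpow T n x z ∧ T z y := Iff.rfl

lemma rpow_add (T : α → α → Prop) (m n : ℕ) (x y : α) :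
    rpow T (m + n) x y ↔ ∃ z, rpow T m x z ∧ rpow T n z y := by
  induction n generalizing y with
  | zero => simp [rpow]
  | succ n ih =>
    constructor
    · rintro ⟨z, hz, hT⟩
      obtain ⟨w, hw1, hw2⟩ := (ih z).mp hz
      exact ⟨w, hw1, z, hw2, hT⟩
    · rintro ⟨w, hw, z, hz, hT⟩
      exact ⟨z, (ih z).mpr ⟨w, hw, hz⟩, hT⟩

lemma rpow_edge (e T : α → α → Prop)
    (h : ∀ a b, e a b ↔ ∃ p q, e p q ∧ T p a ∧ T q b) :
    ∀ n a b, e a b ↔ ∃ p q, e p q ∧ rpow T n p a ∧ rpow T n q b := by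
  intro n
  induction n with
  | zero =>
    intro a b
    constructor
    · intro hab; exact ⟨a, b, hab, rfl, rfl⟩
    · rintro ⟨p, q, hpq, rfl, rfl⟩; exact hpq
  | succ n ih =>
    intro a b
    constructor
    · intro hab
      obtain ⟨u, v, huv, hua, hvb⟩ := (h a b).mp hab
      obtain ⟨p, q, hpq, hpu, hqv⟩ := (ih u v).mp huv
      exact ⟨p, q, hpq, ⟨u, hpu, hua⟩, ⟨v, hqv, hvb⟩⟩
    · rintro ⟨p, q, hpq, ⟨u, hpu, hua⟩, ⟨v, hqv, hvb⟩⟩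
      exact (h a b).mpr ⟨u, v, (ih u v).mpr ⟨p, q, hpq, hpu, hqv⟩, hua, hvb⟩

lemma rpow_dom (T : α → α → Prop) (hdom : ∀ x, ∃ y, T x y) :
    ∀ n x, ∃ y, rpow T n x y := by
  intro n
  induction n with
  | zero => exact fun x => ⟨x, rfl⟩
  | succ n ih =>
    intro x
    obtain ⟨z, hz⟩ := ih x
    obtain ⟨y, hy⟩ := hdom z
    exact ⟨y, z, hz, hy⟩

lemma rpow_img (T : α → α → Prop) (himg : ∀ y, ∃ x, T x y) :
    ∀ n y, ∃ x, rpow T n x y := by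
  intro n
  induction n with
  | zero => exact fun y => ⟨y, rfl⟩
  | succ n ih =>
    intro y
    obtain ⟨z, hz⟩ := himg y
    obtain ⟨x, hx⟩ := ih z
    exact ⟨x, z, hx, hz⟩

lemma exists_idem [Finite α] (T : α → α → Prop) :
    ∃ M, 1 ≤ M ∧ rpow T (2 * M) = rpow T M := by
  obtain ⟨i, j, hne, hij⟩ := Finite.exists_ne_map_eq_of_infinite (rpow T)
  wlog hlt : i < j generalizing i j
  · exact this j i hne.symm hij.symm (by omega)
  set p := j - i with hp
  have hp1 : 1 ≤ p := by omega
  have hbase : rpow T (i + p) = rpow T i := by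
    rw [hp, show i + (j - i) = j by omega]
    exact hij.symm
  have hstep : ∀ k, i ≤ k → rpow T (k + p) = rpow T k := by
    intro k hk
    induction k, hk using Nat.le_induction with
    | base => exact hbase
    | succ k hk ih =>
      rw [show k + 1 + p = (k + p) + 1 by omega]
      show (fun x y => ∃ z, rpow T (k + p) x z ∧ T z y)
          = fun x y => ∃ z, rpow T k x z ∧ T z y
      rw [ih]
  have hip : i + 1 ≤ (i + 1) * p := Nat.le_mul_of_pos_right _ hp1
  have hmult : ∀ jj : ℕ, rpow T ((i+1) * p + jj * p) = rpow T ((i+1) * p) := by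
    intro jj
    induction jj with
    | zero => simp
    | succ jj ih =>
      rw [show (i+1)*p + (jj+1)*p = ((i+1)*p + jj*p) + p by ring]
      rw [hstep _ (by omega), ih]
  refine ⟨(i+1) * p, by omega, ?_⟩
  rw [show 2 * ((i+1)*p) = (i+1)*p + (i+1)*p by ring]
  exact hmult (i+1)

lemma chain_rec {β : Type} [Finite β] (D : β → Prop) (St : β → β → Prop)
    (htrans : ∀ a b c, St a b → St b c → St a c)
    (hstep : ∀ x, D x → ∃ y, D y ∧ St y x) (x0 : β) (hx0 : D x0) :
    ∃ c, D c ∧ St c c ∧ St c x0 := by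
  classical
  let next : {x : β // D x} → {x : β // D x} := fun x =>
    ⟨(hstep x.1 x.2).choose, (hstep x.1 x.2).choose_spec.1⟩
  let seq : ℕ → {x : β // D x} := fun n => next^[n] ⟨x0, hx0⟩
  have hs : ∀ n, St (seq (n+1)).1 (seq n).1 := by
    intro n
    have h : seq (n+1) = next (seq n) := Function.iterate_succ_apply' next n _
    rw [h]
    exact (hstep (seq n).1 (seq n).2).choose_spec.2
  have hchain : ∀ i j, i < j → St (seq j).1 (seq i).1 := by
    intro i j hij
    induction j, hij using Nat.le_induction with
    | base => exact hs i
    | succ j hj ih => exact htrans _ _ _ (hs j) ih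
  have h0 : (seq 0).1 = x0 := rfl
  obtain ⟨i, j, hne, hij⟩ := Finite.exists_ne_map_eq_of_infinite seq
  rcases hne.lt_or_gt with h | h
  · have h1 := hchain i j h
    rw [hij] at h1
    have h2 := hchain 0 j (by omega)
    rw [h0] at h2
    exact ⟨(seq j).1, (seq j).2, h1, h2⟩
  · have h1 := hchain j i h
    rw [← hij] at h1
    have h2 := hchain 0 i (by omega)
    rw [h0] at h2
    exact ⟨(seq i).1, (seq i).2, h1, h2⟩

lemma subset_univ (H : Gph) (hfin : Finite H.1) (hc : IsRCore H) (W : Set H.1)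
    (hw1 : WRel H ⟨↥W, fun c d => H.2 c.1 d.1⟩)
    (hw2 : WRel (⟨↥W, fun c d => H.2 c.1 d.1⟩ : Gph) H) : ∀ x, x ∈ W := by
  haveI := hfin
  have hle : Nat.card H.1 ≤ Nat.card W := hc _ inferInstance hw1 hw2
  have hinj : Function.Injective (Subtype.val : W → H.1) := Subtype.val_injective
  have hge : Nat.card W ≤ Nat.card H.1 := Nat.card_le_card_of_injective _ hinj
  have hbij : Function.Bijective (Subtype.val : W → H.1) :=
    (Nat.bijective_iff_injective_and_card _).mpr ⟨hinj, le_antisymm hge hle⟩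
  intro x
  obtain ⟨w, rfl⟩ := hbij.2 x
  exact w.2

end RCoreAux

/-- The R-core of a graph `G` is isomorphic to an induced subgraph of `G`. -/
theorem stmt_11 (G H : Gph) (hGfin : Finite G.1) (hHfin : Finite H.1)
    (hGsym : ∀ u v, G.2 u v → G.2 v u) (hHsym : ∀ u v, H.2 u v → H.2 v u)
    (hHc : IsRCore H)                 -- H is an R-core ...
    (h1 : WRel G H) (h2 : WRel H G) : -- ... weakly relationally equivalent to G
    ∃ f : H.1 → G.1, Function.Injective f ∧ ∀ u v, H.2 u v ↔ G.2 (f u) (f v) := by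
  classical
  haveI := hGfin
  haveI := hHfin
  obtain ⟨R, hRdom, hRimg, hRedge⟩ := h1
  obtain ⟨S, hSdom, hSimg, hSedge⟩ := h2
  set T : H.1 → H.1 → Prop := fun u v => ∃ g, S u g ∧ R g v with hT
  have hTdom : ∀ x, ∃ y, T x y := by
    intro x
    obtain ⟨g, hg⟩ := hSdom x
    obtain ⟨y, hy⟩ := hRdom g
    exact ⟨y, g, hg, hy⟩
  have hTimg : ∀ y, ∃ x, T x y := by
    intro y
    obtain ⟨g, hg⟩ := hRimg y
    obtain ⟨x, hx⟩ := hSimg g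
    exact ⟨x, g, hx, hg⟩
  have hTedge : ∀ a b, H.2 a b ↔ ∃ p q, H.2 p q ∧ T p a ∧ T q b := by
    intro a b
    constructor
    · intro hab
      obtain ⟨u, v, huv, hua, hvb⟩ := (hRedge a b).mp hab
      obtain ⟨p, q, hpq, hpu, hqv⟩ := (hSedge u v).mp huv
      exact ⟨p, q, hpq, ⟨u, hpu, hua⟩, ⟨v, hqv, hvb⟩⟩
    · rintro ⟨p, q, hpq, ⟨u, hpu, hua⟩, ⟨v, hqv, hvb⟩⟩
      exact (hRedge a b).mpr ⟨u, v, (hSedge u v).mpr ⟨p, q, hpq, hpu, hqv⟩, hua, hvb⟩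
  obtain ⟨M, hM1, hMidem⟩ := RCoreAux.exists_idem T
  set E : H.1 → H.1 → Prop := RCoreAux.rpow T M with hE
  have hEtrans : ∀ a b c, E a b → E b c → E a c := by
    intro a b c hab hbc
    have h : RCoreAux.rpow T (M + M) a c := (RCoreAux.rpow_add T M M a c).mpr ⟨b, hab, hbc⟩
    rw [show M + M = 2 * M by ring, hMidem] at h
    exact h
  have hEdom : ∀ x, ∃ y, E x y := RCoreAux.rpow_dom T hTdom M
  have hEimg : ∀ y, ∃ x, E x y := RCoreAux.rpow_img T hTimg M
  have hEedge : ∀ a b, H.2 a b ↔ ∃ p q, H.2 p q ∧ E p a ∧ E q b :=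
    RCoreAux.rpow_edge H.2 T hTedge M
  -- E is reflexive, by minimality applied to the set of E-recurrent vertices
  have hErefl : ∀ x, E x x := by
    have hsub := RCoreAux.subset_univ H hHfin hHc {c | E c c} ?_ ?_
    · exact hsub
    · refine ⟨fun a c => E a c.1, ?_, ?_, ?_⟩
      · intro a
        obtain ⟨c, -, hcc, hca⟩ := RCoreAux.chain_rec (fun _ => True) (fun y x => E x y)
          (fun a b c hab hbc => hEtrans c b a hbc hab)
          (fun x _ => by obtain ⟨y, hy⟩ := hEdom x; exact ⟨y, trivial, hy⟩) a trivial
        exact ⟨⟨c, hcc⟩, hca⟩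
      · intro c; exact ⟨c.1, c.2⟩
      · intro a b; exact hEedge a.1 b.1
    · refine ⟨fun c a => E c.1 a, ?_, ?_, ?_⟩
      · intro c; exact ⟨c.1, c.2⟩
      · intro a
        obtain ⟨c, -, hcc, hca⟩ := RCoreAux.chain_rec (fun _ => True) E hEtrans
          (fun x _ => by obtain ⟨y, hy⟩ := hEimg x; exact ⟨y, trivial, hy⟩) a trivial
        exact ⟨⟨c, hcc⟩, hca⟩
      · intro a b
        constructor
        · intro hab
          obtain ⟨p, q, hpq, hpa, hqb⟩ := (hEedge a b).mp hab
          obtain ⟨c, hcD, hcc, hcpq⟩ := RCoreAux.chain_rec (fun x : H.1 × H.1 => H.2 x.1 x.2)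
            (fun y x => E y.1 x.1 ∧ E y.2 x.2)
            (fun a b c hab hbc => ⟨hEtrans _ _ _ hab.1 hbc.1, hEtrans _ _ _ hab.2 hbc.2⟩)
            (fun x hx => by
              obtain ⟨p', q', hh1, hh2, hh3⟩ := (hEedge x.1 x.2).mp hx
              exact ⟨(p', q'), hh1, hh2, hh3⟩)
            (p, q) hpq
          exact ⟨⟨c.1, hcc.1⟩, ⟨c.2, hcc.2⟩, hcD,
            hEtrans _ _ _ hcpq.1 hpa, hEtrans _ _ _ hcpq.2 hqb⟩
        · rintro ⟨c, d, hcd, hca, hdb⟩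
          exact (hEedge a b).mpr ⟨c.1, d.1, hcd, hca, hdb⟩
  -- H is point-determining, by minimality applied to deleting a twin vertex
  have hpd : ∀ a b, (∀ y, H.2 a y ↔ H.2 b y) → a = b := by
    intro a b hn
    by_contra hne
    set r : H.1 → H.1 := fun x => if x = b then a else x with hr
    have hrne : ∀ x, r x ≠ b := by
      intro x
      by_cases hx : x = b
      · simpa [hr, hx] using hne
      · simpa [hr, hx] using hx
    have hr1 : ∀ x y, H.2 x y → H.2 (r x) y := by
      intro x y h
      by_cases hx : x = b
      · subst hx
        simpa [hr] using (hn y).mpr h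
      · simpa [hr, hx] using h
    have hredge : ∀ x y, H.2 x y → H.2 (r x) (r y) := by
      intro x y h
      exact hHsym _ _ (hr1 y (r x) (hHsym _ _ (hr1 x y h)))
    have hq : ∀ x, x = r x ∨ (r x = a ∧ x = b) := by
      intro x
      by_cases hx : x = b
      · right; simp [hr, hx]
      · left; simp [hr, hx]
    refine (RCoreAux.subset_univ H hHfin hHc {x | x ≠ b} ?_ ?_ b) rfl
    · refine ⟨fun x w => w.1 = r x, ?_, ?_, ?_⟩
      · intro x
        exact ⟨⟨r x, hrne x⟩, rfl⟩
      · intro w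
        refine ⟨w.1, ?_⟩
        have hw : w.1 ≠ b := w.2
        simp [hr, hw]
      · intro w w'
        constructor
        · intro h
          have hw : w.1 ≠ b := w.2
          have hw' : w'.1 ≠ b := w'.2
          exact ⟨w.1, w'.1, h, by simp [hr, hw], by simp [hr, hw']⟩
        · rintro ⟨x, y, hxy, hw, hw'⟩
          show H.2 w.1 w'.1
          rw [hw, hw']
          exact hredge x y hxy
    · refine ⟨fun w x => x = w.1 ∨ (w.1 = a ∧ x = b), ?_, ?_, ?_⟩
      · intro w; exact ⟨w.1, Or.inl rfl⟩
      · intro x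
        by_cases hx : x = b
        · exact ⟨⟨a, hne⟩, Or.inr ⟨rfl, hx⟩⟩
        · exact ⟨⟨x, hx⟩, Or.inl rfl⟩
      · intro x y
        constructor
        · intro h
          exact ⟨⟨r x, hrne x⟩, ⟨r y, hrne y⟩, hredge x y h, hq x, hq y⟩
        · rintro ⟨w, w', hww', hwx, hw'y⟩
          have hww2 : H.2 w.1 w'.1 := hww'
          have h1 : H.2 x w'.1 := by
            rcases hwx with rfl | ⟨ha, rfl⟩
            · exact hww2
            · rw [ha] at hww2
              exact (hn w'.1).mp hww2
          rcases hw'y with rfl | ⟨ha, rfl⟩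
          · exact h1
          · rw [ha] at h1
            exact hHsym _ _ ((hn x).mp (hHsym _ _ h1))
  -- E is antisymmetric
  have hanti : ∀ u v, E u v → E v u → u = v := by
    intro u v huv hvu
    apply hpd
    intro y
    constructor
    · intro h; exact (hEedge v y).mpr ⟨u, y, h, huv, hErefl y⟩
    · intro h; exact (hEedge u y).mpr ⟨v, y, h, hvu, hErefl y⟩
  -- construct the embedding
  obtain ⟨N, hN⟩ : ∃ N, M = N + 1 := ⟨M - 1, by omega⟩
  have hex : ∀ u, ∃ g, (∃ w, RCoreAux.rpow T N u w ∧ S w g) ∧ R g u := by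
    intro u
    have h := hErefl u
    rw [hE, hN] at h
    obtain ⟨w, hw, g, hg1, hg2⟩ := (RCoreAux.rpow_succ T N u u).mp h
    exact ⟨g, ⟨w, hw, hg1⟩, hg2⟩
  choose f hfA hfR using hex
  refine ⟨f, ?_, ?_⟩
  · intro u v heq
    apply hanti
    · rw [hE, hN]
      obtain ⟨w, hw1, hw2⟩ := hfA u
      refine (RCoreAux.rpow_succ T N u v).mpr ⟨w, hw1, f u, hw2, ?_⟩
      rw [heq]; exact hfR v
    · rw [hE, hN]
      obtain ⟨w, hw1, hw2⟩ := hfA v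
      refine (RCoreAux.rpow_succ T N v u).mpr ⟨w, hw1, f v, hw2, ?_⟩
      rw [← heq]; exact hfR u
  · intro u v
    constructor
    · intro h
      obtain ⟨w, hw1, hw2⟩ := hfA u
      obtain ⟨w', hw1', hw2'⟩ := hfA v
      have hww' : H.2 w w' :=
        (RCoreAux.rpow_edge H.2 T hTedge N w w').mpr ⟨u, v, h, hw1, hw1'⟩
      exact (hSedge (f u) (f v)).mpr ⟨w, w', hww', hw2, hw2'⟩
    · intro h
      exact (hRedge u v).mpr ⟨f u, f v, h, hfR u, hfR v⟩
end

section
/- All solutions R of G * R = G (relations with full domain from G to itself) are automorphisms of G if and only if G satisfies condition N: N_G(x) ⊆ N_G(y) implies x = y for all vertices x, y. -/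
namespace Stmt12Aux

variable {V : Type}

/-- Iterated relation composition, `Pow R 0 = Eq`, `Pow R (n+1) = Pow R n ∘ R`. -/
def Pow (R : V → V → Prop) : ℕ → (V → V → Prop)
  | 0 => fun x y => x = y
  | n+1 => fun x z => ∃ y, Pow R n x y ∧ R y z

lemma pow_add (R : V → V → Prop) (m n : ℕ) (x z : V) :
    Pow R (m + n) x z ↔ ∃ y, Pow R m x y ∧ Pow R n y z := by
  induction n generalizing z with
  | zero =>
    constructor
    · intro h; exact ⟨z, h, rfl⟩
    · rintro ⟨y, hy, rfl⟩; exact hy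
  | succ n ih =>
    constructor
    · rintro ⟨y, hy, hR⟩
      obtain ⟨w, hw1, hw2⟩ := (ih y).mp hy
      exact ⟨w, hw1, y, hw2, hR⟩
    · rintro ⟨y, hy, w, hw1, hw2⟩
      exact ⟨w, (ih w).mpr ⟨y, hy, hw1⟩, hw2⟩

lemma pow_total (R : V → V → Prop) (htot : ∀ v, ∃ w, R v w) :
    ∀ n v, ∃ w, Pow R n v w := by
  intro n
  induction n with
  | zero => exact fun v => ⟨v, rfl⟩
  | succ n ih =>
    intro v
    obtain ⟨w, hw⟩ := ih v
    obtain ⟨u, hu⟩ := htot w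
    exact ⟨u, w, hw, hu⟩

lemma pow_sol (R E : V → V → Prop)
    (heq : ∀ a b, E a b ↔ ∃ u v, E u v ∧ R u a ∧ R v b) :
    ∀ n a b, E a b ↔ ∃ u v, E u v ∧ Pow R n u a ∧ Pow R n v b := by
  intro n
  induction n with
  | zero =>
    intro a b
    constructor
    · intro h; exact ⟨a, b, h, rfl, rfl⟩
    · rintro ⟨u, v, h, rfl, rfl⟩; exact h
  | succ n ih =>
    intro a b
    constructor
    · intro h
      obtain ⟨u, v, huv, hua, hvb⟩ := (heq a b).mp h
      obtain ⟨u', v', huv', hu', hv'⟩ := (ih u v).mp huv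
      exact ⟨u', v', huv', ⟨u, hu', hua⟩, ⟨v, hv', hvb⟩⟩
    · rintro ⟨u', v', huv', ⟨u, hu', hua⟩, ⟨v, hv', hvb⟩⟩
      exact (heq a b).mpr ⟨u, v, (ih u v).mpr ⟨u', v', huv', hu', hv'⟩, hua, hvb⟩

end Stmt12Aux

open Stmt12Aux in
/-- All solutions of `G * R = G` (relations with full domain) are automorphisms of `G`
iff `G` satisfies condition N: `N_G(x) ⊆ N_G(y)` implies `x = y`. -/
theorem stmt_12 {V : Type} [Finite V] (E : V → V → Prop)
    (hsym : ∀ u v, E u v → E v u) :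
    (∀ R : V → V → Prop,
        (∀ v, ∃ w, R v w) → (∀ w, ∃ v, R v w) →
        (∀ a b, E a b ↔ ∃ u v, E u v ∧ R u a ∧ R v b) →   -- G * R = G
        ∃ f : V ≃ V, (∀ x y, R x y ↔ y = f x) ∧ ∀ u v, E u v ↔ E (f u) (f v))
      ↔ (∀ x y : V, (∀ z, E x z → E y z) → x = y) := by
  constructor
  · -- easy direction
    intro H x y hxy
    set R : V → V → Prop := fun a b => a = b ∨ (a = x ∧ b = y) with hRdef
    have hsol : ∀ a b, E a b ↔ ∃ u v, E u v ∧ R u a ∧ R v b := by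
      intro a b
      constructor
      · intro h; exact ⟨a, b, h, Or.inl rfl, Or.inl rfl⟩
      · rintro ⟨u, v, huv, (rfl | ⟨rfl, rfl⟩), (rfl | ⟨rfl, rfl⟩)⟩
        · exact huv
        · exact hsym _ _ (hxy _ (hsym _ _ huv))
        · exact hxy _ huv
        · exact hxy _ (hsym _ _ (hxy _ huv))
    obtain ⟨f, hf, -⟩ := H R (fun v => ⟨v, Or.inl rfl⟩) (fun w => ⟨w, Or.inl rfl⟩) hsol
    have h1 : y = f x := (hf x y).mp (Or.inr ⟨rfl, rfl⟩)
    have h2 : x = f x := (hf x x).mp (Or.inl rfl)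
    rw [h2, h1]
  · -- hard direction
    intro hN R htot hsur heq
    -- find a < b with Pow R (a+1) = Pow R (b+1)
    obtain ⟨i, j, hij, hpow⟩ :=
      Finite.exists_ne_map_eq_of_infinite (fun n : ℕ => Pow R (n + 1))
    obtain ⟨a, b, hab, hp⟩ : ∃ a b : ℕ, a < b ∧ Pow R a = Pow R b := by
      rcases lt_or_gt_of_ne hij with h | h
      · exact ⟨i + 1, j + 1, by omega, hpow⟩
      · exact ⟨j + 1, i + 1, by omega, hpow.symm⟩
    set p := b - a with hpdef
    have hp1 : 1 ≤ p := by omega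
    have hstep : ∀ m, a ≤ m → ∀ x z, Pow R (m + p) x z ↔ Pow R m x z := by
      intro m hm x z
      rw [show m + p = (a + p) + (m - a) by omega]
      rw [show (a + p) = b by omega]
      constructor
      · intro h
        obtain ⟨y, hy1, hy2⟩ := (pow_add R b (m - a) x z).mp h
        rw [← hp] at hy1
        exact (show Pow R (a + (m - a)) x z ↔ Pow R m x z by
          rw [show a + (m - a) = m by omega]).mp
          ((pow_add R a (m - a) x z).mpr ⟨y, hy1, hy2⟩)
      · intro h
        have h' : Pow R (a + (m - a)) x z := by rwa [show a + (m - a) = m by omega]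
        obtain ⟨y, hy1, hy2⟩ := (pow_add R a (m - a) x z).mp h'
        rw [hp] at hy1
        exact (pow_add R b (m - a) x z).mpr ⟨y, hy1, hy2⟩
    have hper : ∀ jj m, a ≤ m → ∀ x z, Pow R (m + jj * p) x z ↔ Pow R m x z := by
      intro jj
      induction jj with
      | zero => intro m hm x z; rw [show m + 0 * p = m by omega]
      | succ jj ih =>
        intro m hm x z
        rw [show m + (jj + 1) * p = (m + jj * p) + p by ring]
        rw [hstep (m + jj * p) (by omega) x z]
        exact ih m hm x z
    set k := (a + 1) * p with hkdef
    have hka : a ≤ k := by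
      have := Nat.le_mul_of_pos_right (a + 1) (by omega : 0 < p)
      omega
    have hk1 : 1 ≤ k := by
      have := Nat.le_mul_of_pos_right (a + 1) (by omega : 0 < p)
      omega
    set Q := Pow R k with hQdef
    have hQ2 : ∀ x z, Pow R (2 * k) x z ↔ Q x z := by
      intro x z
      rw [show 2 * k = k + (a + 1) * p by ring]
      exact hper (a + 1) k hka x z
    have hQcomp : ∀ x z, (∃ y, Q x y ∧ Q y z) ↔ Q x z := by
      intro x z
      rw [← hQ2 x z, show 2 * k = k + k by ring]
      exact (pow_add R k k x z).symm
    have hQsol := pow_sol R E heq k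
    have hQtot := pow_total R htot k
    -- Q is contained in the identity by condition N
    have hQsub : ∀ x y, Q x y → x = y := by
      intro x y hxy
      apply hN
      intro z hxz
      obtain ⟨u, v, huv, hux, hvz⟩ := (hQsol x z).mp hxz
      have huy : Q u y := (hQcomp u y).mp ⟨x, hux, hxy⟩
      exact (hQsol y z).mpr ⟨u, v, huv, huy, hvz⟩
    have hQeq : ∀ x z, Q x z ↔ x = z := by
      intro x z
      constructor
      · exact hQsub x z
      · rintro rfl
        obtain ⟨w, hw⟩ := hQtot x
        have hxw := hQsub x w hw
        subst hxw
        exact hw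
    -- k = s + 1
    set s := k - 1 with hsdef
    set S := Pow R s with hSdef
    have hks : k = s + 1 := by omega
    have hSR : ∀ x z, (∃ y, S x y ∧ R y z) ↔ x = z := by
      intro x z
      have : Pow R (s + 1) x z ↔ x = z := by rw [← hks]; exact hQeq x z
      exact this
    have hRS : ∀ x z, (∃ y, R x y ∧ S y z) ↔ x = z := by
      intro x z
      have h1 : Pow R (1 + s) x z ↔ x = z := by
        rw [show 1 + s = k by omega]; exact hQeq x z
      rw [← h1]
      rw [pow_add R 1 s x z]
      constructor
      · rintro ⟨y, hy1, hy2⟩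
        exact ⟨y, ⟨x, rfl, hy1⟩, hy2⟩
      · rintro ⟨y, ⟨t, rfl, ht⟩, hy2⟩
        exact ⟨y, ht, hy2⟩
    have hStot := pow_total R htot s
    have hfun : ∀ u a b, R u a → R u b → a = b := by
      intro u a b hua hub
      obtain ⟨z, hz⟩ := hStot a
      have hz' : u = z := (hRS u z).mp ⟨a, hua, hz⟩
      subst hz'
      exact (hSR a b).mp ⟨u, hz, hub⟩
    have hinj : ∀ u v a, R u a → R v a → u = v := by
      intro u v a hua hva
      obtain ⟨z, hz⟩ := hStot a
      have h1 : u = z := (hRS u z).mp ⟨a, hua, hz⟩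
      have h2 : v = z := (hRS v z).mp ⟨a, hva, hz⟩
      rw [h1, h2]
    -- build the equiv
    classical
    let f0 : V → V := fun u => Classical.choose (htot u)
    have hf0 : ∀ u, R u (f0 u) := fun u => Classical.choose_spec (htot u)
    have hf0inj : Function.Injective f0 := by
      intro u v huv
      exact hinj u v (f0 u) (hf0 u) (huv ▸ hf0 v)
    have hbij : Function.Bijective f0 := Finite.injective_iff_bijective.mp hf0inj
    refine ⟨Equiv.ofBijective f0 hbij, ?_, ?_⟩
    · intro x y
      constructor
      · intro h; exact hfun x y (f0 x) h (hf0 x)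
      · rintro rfl; exact hf0 x
    · intro u v
      constructor
      · intro h
        exact (heq (f0 u) (f0 v)).mpr ⟨u, v, h, hf0 u, hf0 v⟩
      · intro h
        obtain ⟨u', v', huv', hu', hv'⟩ := (heq (f0 u) (f0 v)).mp h
        have h1 : u' = u := hinj u' u (f0 u) hu' (hf0 u)
        have h2 : v' = v := hinj v' v (f0 v) hv' (hf0 v)
        rwa [h1, h2] at huv'
end

section
/- Every locally injective homomorphism from a finite connected graph G to itself is an automorphism of G. -/
private lemma iterAdj {V : Type*} (G : SimpleGraph V) (f : G →g G) :
    ∀ (k : ℕ) {u v : V}, G.Adj u v → G.Adj ((⇑f)^[k] u) ((⇑f)^[k] v) := by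
  intro k
  induction k with
  | zero => intro u v h; simpa using h
  | succ k ih =>
    intro u v h
    simp only [Function.iterate_succ_apply']
    exact f.map_adj (ih h)

private lemma iterInj {V : Type*} (G : SimpleGraph V) (f : G →g G)
    (hli : ∀ v : V, Set.InjOn f (G.neighborSet v)) :
    ∀ (k : ℕ) (v : V), Set.InjOn ((⇑f)^[k]) (G.neighborSet v) := by
  intro k
  induction k with
  | zero => intro v; simpa using Set.injOn_id _
  | succ k ih =>
    intro v
    rw [Function.iterate_succ']
    exact (hli ((⇑f)^[k] v)).comp (ih v) (fun u hu => iterAdj G f k hu)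

/-- Every locally injective homomorphism from a finite connected graph to itself is
an automorphism. -/
theorem stmt_16 {V : Type*} [Fintype V] (G : SimpleGraph V) (hc : G.Connected)
    (f : G →g G) (hli : ∀ v : V, Set.InjOn f (G.neighborSet v)) :
    Function.Bijective f ∧ ∀ u v : V, G.Adj u v ↔ G.Adj (f u) (f v) := by
  obtain ⟨v0⟩ := hc.nonempty
  have key : ∃ m p : ℕ, 0 < p ∧ (⇑f)^[m + p] = (⇑f)^[m] := by
    obtain ⟨a, b, hab, heq⟩ := Finite.exists_ne_map_eq_of_infinite (fun n : ℕ => (⇑f)^[n])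
    replace heq : (⇑f)^[a] = (⇑f)^[b] := heq
    rcases lt_or_gt_of_ne hab with h | h
    · exact ⟨a, b - a, by omega, by rw [Nat.add_sub_cancel' h.le]; exact heq.symm⟩
    · exact ⟨b, a - b, by omega, by rw [Nat.add_sub_cancel' h.le]; exact heq⟩
  obtain ⟨m, p, hp, hmp⟩ := key
  set W : Set V := Set.range ((⇑f)^[m]) with hW
  have hWfix : ∀ w ∈ W, (⇑f)^[p] w = w := by
    rintro w ⟨x, rfl⟩
    calc (⇑f)^[p] ((⇑f)^[m] x) = (⇑f)^[m + p] x := by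
          rw [add_comm, Function.iterate_add_apply]
      _ = (⇑f)^[m] x := by rw [hmp]
  have hclosed : ∀ u v : V, G.Adj u v → v ∈ W → u ∈ W := by
    intro u v huv hv
    have hfix : (⇑f)^[p] v = v := hWfix v hv
    have hmaps : Set.MapsTo ((⇑f)^[p]) (G.neighborSet v) (G.neighborSet v) := by
      intro x hx
      have h1 := iterAdj G f p (hx : G.Adj v x)
      rwa [hfix] at h1
    have hbij : Set.BijOn ((⇑f)^[p]) (G.neighborSet v) (G.neighborSet v) := by
      have hfin : (G.neighborSet v).Finite := Set.toFinite _
      exact (Set.Finite.injOn_iff_bijOn_of_mapsTo hfin hmaps).mp (iterInj G f hli p v)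
    have hbijk : ∀ k : ℕ, Set.BijOn ((⇑f)^[p * k]) (G.neighborSet v) (G.neighborSet v) := by
      intro k
      rw [Function.iterate_mul]
      induction k with
      | zero => simpa using Set.bijOn_id _
      | succ k ih =>
        rw [Function.iterate_succ']
        exact hbij.comp ih
    obtain ⟨x, hx, hxu⟩ := (hbijk m).surjOn (huv.symm : u ∈ G.neighborSet v)
    refine ⟨(⇑f)^[p * m - m] x, ?_⟩
    have hle : m ≤ p * m := Nat.le_mul_of_pos_left m hp
    rw [← Function.iterate_add_apply]
    have h2 : m + (p * m - m) = p * m := by omega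
    rw [h2]
    exact hxu
  have hWall : ∀ v : V, v ∈ W := by
    have hwalk : ∀ {a b : V}, G.Walk a b → a ∈ W → b ∈ W := by
      intro a b wk
      induction wk with
      | nil => exact id
      | @cons a c b h q ih => intro ha; exact ih (hclosed c a h.symm ha)
    intro v
    obtain ⟨wk⟩ := hc ((⇑f)^[m] v0) v
    exact hwalk wk ⟨v0, rfl⟩
  have hfixall : ∀ v : V, (⇑f)^[p] v = v := fun v => hWfix v (hWall v)
  have hleft : Function.LeftInverse ((⇑f)^[p - 1]) f := by
    intro x
    have : (⇑f)^[p - 1] (f x) = (⇑f)^[p - 1 + 1] x := (Function.iterate_succ_apply (⇑f) (p - 1) x).symm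
    rw [this, Nat.sub_add_cancel hp]
    exact hfixall x
  have hright : Function.RightInverse ((⇑f)^[p - 1]) f := by
    intro x
    have : f ((⇑f)^[p - 1] x) = (⇑f)^[p - 1 + 1] x := (Function.iterate_succ_apply' (⇑f) (p - 1) x).symm
    rw [this, Nat.sub_add_cancel hp]
    exact hfixall x
  refine ⟨⟨hleft.injective, hright.surjective⟩, fun u v => ⟨fun h => f.map_adj h, fun h => ?_⟩⟩
  have h3 := iterAdj G f (p - 1) h
  rwa [hleft u, hleft v] at h3
end

section
/- If G is a nontrivial point-determining graph (at least two vertices), then there exists a vertex x of G such that the induced subgraph G − {x} is again point-determining. -/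
/-- Sumner's key lemma. -/
lemma sumner_key {V : Type*} (G : SimpleGraph V)
    (hpd : ∀ u v : V, G.neighborSet u = G.neighborSet v → u = v)
    {a b c d e : V} (hab : a ≠ b)
    (h1 : G.neighborSet a = G.neighborSet b \ {c})
    (hde : d ≠ e)
    (h2 : G.neighborSet d = G.neighborSet e \ {a}) : d = c := by
  have hand : a ∉ G.neighborSet d := by rw [h2]; simp
  have hae : a ∈ G.neighborSet e := by
    by_contra h
    exact hde (hpd d e (by rw [h2, Set.diff_singleton_eq_self h]))
  have hea : e ∈ G.neighborSet a := (G.mem_neighborSet _ _).2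
    ((G.mem_neighborSet _ _).1 hae).symm
  rw [h1] at hea
  have hbe : b ∈ G.neighborSet e := (G.mem_neighborSet _ _).2
    ((G.mem_neighborSet _ _).1 hea.1).symm
  have hbd : b ∈ G.neighborSet d := by
    rw [h2]; exact ⟨hbe, by simpa using hab.symm⟩
  have hdb : d ∈ G.neighborSet b := (G.mem_neighborSet _ _).2
    ((G.mem_neighborSet _ _).1 hbd).symm
  by_contra hdc
  have : d ∈ G.neighborSet a := by rw [h1]; exact ⟨hdb, by simpa using hdc⟩
  exact hand ((G.mem_neighborSet _ _).2 ((G.mem_neighborSet _ _).1 this).symm)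

/-- If `G` is a nontrivial point-determining graph, then some vertex `x` can be removed
so that the induced subgraph `G − {x}` is again point-determining. -/
theorem stmt_17 {V : Type*} [Fintype V] (G : SimpleGraph V)
    (hpd : ∀ u v : V, G.neighborSet u = G.neighborSet v → u = v)
    (h2 : 2 ≤ Fintype.card V) :
    ∃ x : V, ∀ u v : V, u ≠ x → v ≠ x →
      G.neighborSet u \ {x} = G.neighborSet v \ {x} → u = v := by
  classical
  by_contra hcon
  push_neg at hcon
  -- normalize: for each x, get a, b with N a = N b \ {x} and x ∈ N b, a ≠ x, b ≠ x
  have hnorm : ∀ x : V, ∃ a b : V, a ≠ x ∧ b ≠ x ∧ a ≠ b ∧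
      G.neighborSet a = G.neighborSet b \ {x} ∧ x ∈ G.neighborSet b := by
    intro x
    obtain ⟨u, v, hux, hvx, heq, huv⟩ := hcon x
    have hne : G.neighborSet u ≠ G.neighborSet v := fun h => huv (hpd u v h)
    by_cases hxu : x ∈ G.neighborSet u
    · have hxv : x ∉ G.neighborSet v := by
        intro hxv
        apply hne
        rw [← Set.diff_union_of_subset (Set.singleton_subset_iff.2 hxu),
          ← Set.diff_union_of_subset (Set.singleton_subset_iff.2 hxv), heq]
      exact ⟨v, u, hvx, hux, huv.symm, by rw [Set.diff_singleton_eq_self hxv] at heq; exact heq.symm, hxu⟩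
    · have hxv : x ∈ G.neighborSet v := by
        by_contra hxv
        apply hne
        rw [← Set.diff_singleton_eq_self hxu, ← Set.diff_singleton_eq_self hxv, heq]
      exact ⟨u, v, hux, hvx, huv, by rw [Set.diff_singleton_eq_self hxu] at heq; exact heq, hxv⟩
  choose a b hax hbx hab hN hxb using hnorm
  -- pick x of maximum degree
  have hne : (Finset.univ : Finset V).Nonempty := Finset.univ_nonempty_iff.2
    (Fintype.card_pos_iff.1 (by omega))
  obtain ⟨x, -, hmax⟩ := Finset.exists_max_image Finset.univ
    (fun v => (G.neighborSet v).ncard) hne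
  set y := a x with hy
  -- key lemma: a y = x
  have hay : a y = x := sumner_key G hpd (hab x) (hN x) (hab y) (hN y)
  -- so N x = N (b y) \ {y}, and y ∈ N (b y)
  have hNx : G.neighborSet x = G.neighborSet (b y) \ {y} := by
    rw [← hay]; exact hN y
  have hyb : y ∈ G.neighborSet (b y) := hxb y
  have hfin : (G.neighborSet (b y)).Finite := Set.toFinite _
  have hcard : (G.neighborSet (b y)).ncard = (G.neighborSet x).ncard + 1 := by
    rw [hNx, Set.ncard_diff_singleton_add_one hyb hfin]
  have := hmax (b y) (Finset.mem_univ _)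
  omega
end

section
/- A finite graph G (directed, loops allowed) is a full-homomorphism core (F-core) if and only if G is point-determining; moreover, for two F-cores G and H, there is a full homomorphism G → H if and only if there is an embedding G → H (every full homomorphism between point-determining graphs is injective). -/
/-- There is a full homomorphism from `G` to `H`: a vertex map `f` with
`(u,v) ∈ E_G ↔ (f u, f v) ∈ E_H`. -/
def FHom (G H : Gph) : Prop :=
  ∃ f : G.1 → H.1, ∀ u v, G.2 u v ↔ H.2 (f u) (f v)

/-- `G` is an F-core: minimal vertex count among graphs fully homomorphically
equivalent to it. -/
def IsFCore (G : Gph) : Prop :=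
  ∀ H : Gph, Finite H.1 → FHom G H → FHom H G → Nat.card G.1 ≤ Nat.card H.1

/-- `G` is point-determining: distinct vertices have distinct in- and
out-neighbourhoods. -/
def PointDet (G : Gph) : Prop :=
  ∀ u v : G.1, (∀ z, (G.2 u z ↔ G.2 v z) ∧ (G.2 z u ↔ G.2 z v)) → u = v

lemma fhom_inj {G H : Gph} (hG : PointDet G) (f : G.1 → H.1)
    (hf : ∀ u v, G.2 u v ↔ H.2 (f u) (f v)) : Function.Injective f := by
  intro u v h
  apply hG
  intro z
  constructor
  · rw [hf u z, hf v z, h]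
  · rw [hf z u, hf z v, h]

lemma pd_core {G : Gph} (h : PointDet G) : IsFCore G := by
  rintro H hH ⟨f, hf⟩ _
  exact Nat.card_le_card_of_injective f (fhom_inj h f hf)

lemma core_pd {G : Gph} (hG : Finite G.1) (h : IsFCore G) : PointDet G := by
  classical
  by_contra hnd
  simp only [PointDet, not_forall] at hnd
  obtain ⟨u, v, hz, huv⟩ := hnd
  set H : Gph := ⟨{x : G.1 // x ≠ v}, fun a b => G.2 a.1 b.1⟩ with hHdef
  have hHfin : Finite H.1 := Subtype.finite
  let r : G.1 → H.1 := fun x => if hx : x = v then ⟨u, huv⟩ else ⟨x, hx⟩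
  have hr : ∀ a z, (G.2 a z ↔ G.2 (r a).1 z) ∧ (G.2 z a ↔ G.2 z (r a).1) := by
    intro a z
    by_cases ha : a = v
    · simp only [r, dif_pos ha]
      subst ha
      exact ⟨(hz z).1.symm, (hz z).2.symm⟩
    · simp [r, dif_neg ha]
  have hGH : FHom G H := by
    refine ⟨r, fun a b => ?_⟩
    calc G.2 a b ↔ G.2 (r a).1 b := (hr a b).1
      _ ↔ G.2 (r a).1 (r b).1 := (hr b (r a).1).2
  have hHG : FHom H G := ⟨fun a => a.1, fun a b => Iff.rfl⟩
  have := h H hHfin hGH hHG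
  have : Nat.card H.1 < Nat.card G.1 := by
    haveI := Fintype.ofFinite G.1
    haveI := Fintype.ofFinite H.1
    rw [Nat.card_eq_fintype_card, Nat.card_eq_fintype_card]
    have := Fintype.card_subtype_lt (p := fun x => x ≠ v) (x := v) (not_not_intro rfl)
    convert this using 2
  omega

/-- A finite graph is an F-core iff it is point-determining; and for F-cores, a full
homomorphism exists iff an embedding (injective full homomorphism) exists. -/
theorem stmt_18 :
    (∀ G : Gph, Finite G.1 → (IsFCore G ↔ PointDet G)) ∧
    (∀ G H : Gph, Finite G.1 → Finite H.1 → IsFCore G → IsFCore H →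
      (FHom G H ↔ ∃ f : G.1 → H.1, Function.Injective f ∧
        ∀ u v, G.2 u v ↔ H.2 (f u) (f v))) := by
  constructor
  · exact fun G hG => ⟨core_pd hG, fun h => pd_core h⟩
  · intro G H hGf hHf hG hH
    constructor
    · rintro ⟨f, hf⟩
      exact ⟨f, fhom_inj (core_pd hGf hG) f hf, hf⟩
    · rintro ⟨f, _, hf⟩
      exact ⟨f, hf⟩
end

section
/- If G and H are vertex- and edge-surjective homomorphic each to the other (there exist surjective homomorphisms f : G → H and g : H → G), then G and H are isomorphic; consequently every finite graph is its own surjective-homomorphism core. -/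
/-- If there are surjective homomorphisms (vertex- and edge-surjective) both from `G`
to `H` and from `H` to `G`, then `G` and `H` are isomorphic. -/
theorem stmt_19 {V W : Type*} [Finite V] [Finite W]
    (E : V → V → Prop) (F : W → W → Prop)
    (f : V → W) (g : W → V)
    (hf : ∀ u v, E u v → F (f u) (f v)) (hfs : Function.Surjective f)
    (hfe : ∀ a b, F a b → ∃ u v, E u v ∧ f u = a ∧ f v = b)
    (hg : ∀ a b, F a b → E (g a) (g b)) (hgs : Function.Surjective g)
    (hge : ∀ u v, E u v → ∃ a b, F a b ∧ g a = u ∧ g b = v) :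
    ∃ e : V ≃ W, ∀ u v, E u v ↔ F (e u) (e v) := by
  have hgf : Function.Surjective (g ∘ f) := hgs.comp hfs
  have hinj : Function.Injective (g ∘ f) := Finite.injective_iff_surjective.mpr hgf
  have hfi : Function.Injective f := Function.Injective.of_comp hinj
  refine ⟨Equiv.ofBijective f ⟨hfi, hfs⟩, fun u v => ⟨hf u v, fun h => ?_⟩⟩
  obtain ⟨u', v', hE, h1, h2⟩ := hfe _ _ h
  rwa [hfi h1, hfi h2] at hE
end
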